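/- arXiv:1801.08560 — 3 statements merged into one kernel-verified Lean document; each statement's English description precedes it below -/
import Mathlib

section
/- The equation 1 = e^{-s}(s³/2 + s²/2 + s + 1) has a unique solution s₀ in the interval (0, ∞), and this solution satisfies 3.38 < s₀ < 3.39. -/
/-!
Write `f(s) = e^{-s} (s³/2 + s²/2 + s + 1)`. Then `f'(s) = e^{-s} s² (2 - s) / 2`, so `f` increases
from `f(0) = 1` on `[0, 2]` and strictly decreases on `[2, ∞)`. Hence every positive solution of
`f(s) = 1` lies in `(2, ∞)`, where `f` is injective, and a solution exists in `(3.38, 3.39)` since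
`f(3.38) > 1 > f(3.39)`; these two values are certified by Taylor bounds on `exp`.
-/

open Real Set

noncomputable def tangencyFun (s : ℝ) : ℝ := exp (-s) * (s ^ 3 / 2 + s ^ 2 / 2 + s + 1)

lemma hasDerivAt_tangencyFun (s : ℝ) :
    HasDerivAt tangencyFun (exp (-s) * (s ^ 2 * (2 - s) / 2)) s := by
  have hpoly : HasDerivAt (fun x : ℝ => x ^ 3 / 2 + x ^ 2 / 2 + x + 1)
      ((3 : ℕ) * s ^ 2 / 2 + (2 : ℕ) * s ^ 1 / 2 + 1) s :=
    ((((hasDerivAt_pow 3 s).div_const 2).add ((hasDerivAt_pow 2 s).div_const 2)).add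
      (hasDerivAt_id s)).add_const 1
  have hprod : HasDerivAt tangencyFun _ s := (hasDerivAt_neg s).exp.mul hpoly
  convert hprod using 1
  push_cast
  ring

lemma continuous_tangencyFun : Continuous tangencyFun := by
  unfold tangencyFun
  fun_prop

lemma strictMonoOn_tangencyFun : StrictMonoOn tangencyFun (Icc 0 2) := by
  refine strictMonoOn_of_deriv_pos (convex_Icc 0 2) continuous_tangencyFun.continuousOn ?_
  intro x hx
  rw [interior_Icc] at hx
  rw [(hasDerivAt_tangencyFun x).deriv]
  exact mul_pos (exp_pos _) (by nlinarith [pow_pos hx.1 2, hx.2])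

lemma strictAntiOn_tangencyFun : StrictAntiOn tangencyFun (Ici 2) := by
  refine strictAntiOn_of_deriv_neg (convex_Ici 2) continuous_tangencyFun.continuousOn ?_
  intro x hx
  rw [interior_Ici] at hx
  rw [(hasDerivAt_tangencyFun x).deriv]
  have hx2 : (2 : ℝ) < x := hx
  exact mul_neg_of_pos_of_neg (exp_pos _) (by nlinarith [pow_pos (by linarith : (0 : ℝ) < x) 2])

lemma two_lt_of_tangencyFun_eq_one {s : ℝ} (hs : 0 < s) (h : tangencyFun s = 1) : 2 < s := by
  by_contra! hs2
  have : tangencyFun 0 < tangencyFun s :=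
    strictMonoOn_tangencyFun ⟨le_rfl, zero_le_two⟩ ⟨hs.le, hs2⟩ hs
  rw [h] at this
  simp [tangencyFun] at this

lemma tangencyFun_eq_div (s : ℝ) :
    tangencyFun s = (s ^ 3 / 2 + s ^ 2 / 2 + s + 1) / exp s := by
  rw [tangencyFun, exp_neg, inv_mul_eq_div]

lemma one_lt_tangencyFun_338 : 1 < tangencyFun 3.38 := by
  rw [tangencyFun_eq_div, one_lt_div (exp_pos _)]
  have hexp1 : exp 1 ^ 3 < 2.7182818286 ^ 3 :=
    pow_lt_pow_left₀ exp_one_lt_d9 (exp_pos 1).le (by norm_num)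
  have hexp038 : exp 0.38 < 1.4623 := by
    refine (exp_bound' (by norm_num) (by norm_num) (n := 5) (by norm_num)).trans_lt ?_
    norm_num [Finset.sum_range_succ, Nat.factorial]
  calc exp 3.38 = exp 1 ^ 3 * exp 0.38 := by
        rw [exp_one_pow, ← exp_add]; norm_num
    _ < 2.7182818286 ^ 3 * 1.4623 :=
        mul_lt_mul'' hexp1 hexp038 (by positivity) (exp_pos _).le
    _ < 3.38 ^ 3 / 2 + 3.38 ^ 2 / 2 + 3.38 + 1 := by norm_num

lemma tangencyFun_339_lt_one : tangencyFun 3.39 < 1 := by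
  rw [tangencyFun_eq_div, div_lt_one (exp_pos _)]
  refine lt_of_lt_of_le ?_ (sum_le_exp_of_nonneg (by norm_num) 11)
  norm_num [Finset.sum_range_succ, Nat.factorial]

theorem stmt_5 :
    ∃ s₀ : ℝ, 0 < s₀ ∧
      Real.exp (-s₀) * (s₀ ^ 3 / 2 + s₀ ^ 2 / 2 + s₀ + 1) = 1 ∧
      (3.38 : ℝ) < s₀ ∧ s₀ < 3.39 ∧
      ∀ s : ℝ, 0 < s → Real.exp (-s) * (s ^ 3 / 2 + s ^ 2 / 2 + s + 1) = 1 → s = s₀ := by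
  obtain ⟨s₀, ⟨h338, h339⟩, hs₀⟩ :=
    intermediate_value_Ioo' (by norm_num) continuous_tangencyFun.continuousOn
      ⟨tangencyFun_339_lt_one, one_lt_tangencyFun_338⟩
  have hs₀2 : 2 < s₀ := by linarith
  refine ⟨s₀, by linarith, hs₀, h338, h339, fun s hs hfs => ?_⟩
  have hs2 := two_lt_of_tangencyFun_eq_one hs hfs
  exact strictAntiOn_tangencyFun.injOn hs2.le hs₀2.le (hfs.trans hs₀.symm)
end

section
/- Let λ > 0 and let g(t) = e^{-λt}(1 + λt + (λt)²/2). Let s₀ be the unique positive solution of 1 = e^{-s}(s³/2 + s²/2 + s + 1) and set t₀ = s₀/λ. Define g_con(t) = g(t) for t > t₀ and g_con(t) = g(t₀) + (t - t₀)g'(t₀) for 0 ≤ t ≤ t₀. Then g_con is convex on [0, ∞). -/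
/-!
Writing `g(t) = e^{-λt}(1 + λt + (λt)²/2)`, one has `g'(t) = -(λ³/2) t² e^{-λt}` and
`g''(t) = (λ³/2)(λt - 2) t e^{-λt}`, so `g` is convex exactly on `[2/λ, ∞)`. With `s = λt`, the
tangency condition becomes `h(s₀) = 1` for `h(s) = e^{-s}(s³/2 + s²/2 + s + 1)`; since
`h'(s) = e^{-s} s²(2 - s)/2`, `h` increases strictly on `[0, 2]` from `h(0) = 1`, so `s₀ > 2`,
i.e. `t₀ > 2/λ`. Replacing a function left of a point `t₀` by its tangent line at `t₀` keeps it
convex as soon as its derivative is monotone on `[t₀, ∞)`: the new derivative is `g'(max t t₀)`.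
-/

open Real Set

noncomputable def tangentExtension (g g' : ℝ → ℝ) (t₀ t : ℝ) : ℝ :=
  if t ≤ t₀ then g t₀ + (t - t₀) * g' t₀ else g t

section TangentExtension

variable {g g' : ℝ → ℝ} {t₀ : ℝ}

theorem hasDerivAt_tangentExtension (hg : ∀ t ∈ Ici t₀, HasDerivAt g (g' t) t) (t : ℝ) :
    HasDerivAt (tangentExtension g g' t₀) (g' (max t t₀)) t := by
  have hline : ∀ s, HasDerivAt (fun x => g t₀ + (x - t₀) * g' t₀) (g' t₀) s := fun s => by
    simpa using (((hasDerivAt_id s).sub_const t₀).mul_const (g' t₀)).const_add (g t₀)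
  rcases lt_trichotomy t t₀ with ht | rfl | ht
  · rw [max_eq_right ht.le]
    refine (hline t).congr_of_eventuallyEq ?_
    filter_upwards [Iio_mem_nhds ht] with x hx
    simp [tangentExtension, (mem_Iio.mp hx).le]
  · rw [max_self]
    have hleft : HasDerivWithinAt (tangentExtension g g' t) (g' t) (Iic t) t :=
      (hline t).hasDerivWithinAt.congr (fun x hx => if_pos hx) (if_pos le_rfl)
    have hright : HasDerivWithinAt (tangentExtension g g' t) (g' t) (Ici t) t := by
      refine (hg t self_mem_Ici).hasDerivWithinAt.congr (fun x hx => ?_)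
        (by simp [tangentExtension])
      rcases (mem_Ici.mp hx).eq_or_lt with rfl | hlt
      · simp [tangentExtension]
      · simp [tangentExtension, not_le.mpr hlt]
    simpa only [Iic_union_Ici, hasDerivWithinAt_univ] using hleft.union hright
  · rw [max_eq_left ht.le]
    refine (hg t (mem_Ici.mpr ht.le)).congr_of_eventuallyEq ?_
    filter_upwards [Ioi_mem_nhds ht] with x hx
    simp [tangentExtension, not_le.mpr (mem_Ioi.mp hx)]

theorem convexOn_univ_tangentExtension (hg : ∀ t ∈ Ici t₀, HasDerivAt g (g' t) t)
    (hg' : MonotoneOn g' (Ici t₀)) : ConvexOn ℝ univ (tangentExtension g g' t₀) := by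
  have hderiv := hasDerivAt_tangentExtension hg
  refine Monotone.convexOn_univ_of_deriv (fun t => (hderiv t).differentiableAt) fun x y hxy => ?_
  rw [(hderiv x).deriv, (hderiv y).deriv]
  exact hg' (le_max_right x t₀) (le_max_right y t₀) (max_le_max_right t₀ hxy)

end TangentExtension

theorem hasDerivAt_exp_neg_mul_cubic (s : ℝ) :
    HasDerivAt (fun s => exp (-s) * (s ^ 3 / 2 + s ^ 2 / 2 + s + 1))
      (exp (-s) * (s ^ 2 * (2 - s) / 2)) s := by
  have hcubic := ((((hasDerivAt_id' s).fun_pow 3).div_const 2).fun_add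
    (((hasDerivAt_id' s).fun_pow 2).div_const 2)).fun_add (hasDerivAt_id' s) |>.add_const 1
  have h := (hasDerivAt_neg' s).exp.fun_mul hcubic
  refine h.congr_deriv ?_
  ring

theorem strictMonoOn_exp_neg_mul_cubic :
    StrictMonoOn (fun s => exp (-s) * (s ^ 3 / 2 + s ^ 2 / 2 + s + 1)) (Icc 0 2) := by
  refine strictMonoOn_of_deriv_pos (convex_Icc 0 2)
    (fun s _ => (hasDerivAt_exp_neg_mul_cubic s).continuousAt.continuousWithinAt) fun s hs => ?_
  rw [interior_Icc] at hs
  rw [(hasDerivAt_exp_neg_mul_cubic s).deriv]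
  have : 0 < 2 - s := sub_pos.mpr hs.2
  have : 0 < s ^ 2 := pow_pos hs.1 2
  positivity

theorem two_lt_of_exp_neg_mul_cubic_eq_one {s : ℝ} (hs : 0 < s)
    (hroot : exp (-s) * (s ^ 3 / 2 + s ^ 2 / 2 + s + 1) = 1) : 2 < s := by
  by_contra! hs₂
  have := strictMonoOn_exp_neg_mul_cubic ⟨le_rfl, zero_le_two⟩ ⟨hs.le, hs₂⟩ hs
  norm_num [hroot] at this

theorem hasDerivAt_exp_neg_mul_quadratic (lam t : ℝ) :
    HasDerivAt (fun t => exp (-lam * t) * (1 + lam * t + (lam * t) ^ 2 / 2))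
      (-(lam ^ 3 / 2) * t ^ 2 * exp (-lam * t)) t := by
  have h := ((hasDerivAt_id' t).const_mul (-lam)).exp.fun_mul
    (((((hasDerivAt_id' t).const_mul lam).const_add 1)).fun_add
      ((((hasDerivAt_id' t).const_mul lam).fun_pow 2).div_const 2))
  refine h.congr_deriv ?_
  ring

theorem monotoneOn_deriv_exp_neg_mul_quadratic {lam : ℝ} (hlam : 0 < lam) :
    MonotoneOn (fun t => -(lam ^ 3 / 2) * t ^ 2 * exp (-lam * t)) (Ici (2 / lam)) := by
  have hderiv : ∀ t, HasDerivAt (fun t => -(lam ^ 3 / 2) * t ^ 2 * exp (-lam * t))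
      (lam ^ 3 / 2 * t * (lam * t - 2) * exp (-lam * t)) t := fun t => by
    refine (((hasDerivAt_id' t).fun_pow 2).const_mul (-(lam ^ 3 / 2))).fun_mul
      ((hasDerivAt_id' t).const_mul (-lam)).exp |>.congr_deriv ?_
    ring
  refine monotoneOn_of_deriv_nonneg (convex_Ici _)
    (fun t _ => (hderiv t).continuousAt.continuousWithinAt)
    (fun t _ => (hderiv t).differentiableAt.differentiableWithinAt) fun t ht => ?_
  rw [interior_Ici, mem_Ioi] at ht
  rw [(hderiv t).deriv]
  have : 0 < t := (div_pos two_pos hlam).trans ht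
  have : 0 ≤ lam * t - 2 := by linarith [(div_lt_iff₀' hlam).mp ht]
  positivity

theorem stmt_6 (lam : ℝ) (hlam : 0 < lam) (s₀ : ℝ) (hs₀ : 0 < s₀)
    (hroot : Real.exp (-s₀) * (s₀ ^ 3 / 2 + s₀ ^ 2 / 2 + s₀ + 1) = 1) :
    ConvexOn ℝ (Set.Ici (0 : ℝ))
      (fun t : ℝ =>
        if t ≤ s₀ / lam then
          Real.exp (-lam * (s₀ / lam)) * (1 + lam * (s₀ / lam) + (lam * (s₀ / lam)) ^ 2 / 2)
            + (t - s₀ / lam) * (-(lam ^ 3 / 2) * (s₀ / lam) ^ 2 * Real.exp (-lam * (s₀ / lam)))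
        else
          Real.exp (-lam * t) * (1 + lam * t + (lam * t) ^ 2 / 2)) := by
  have ht₀ : 2 / lam ≤ s₀ / lam := by
    gcongr
    exact (two_lt_of_exp_neg_mul_cubic_eq_one hs₀ hroot).le
  have hconvex := convexOn_univ_tangentExtension (t₀ := s₀ / lam)
    (fun t _ => hasDerivAt_exp_neg_mul_quadratic lam t)
    ((monotoneOn_deriv_exp_neg_mul_quadratic hlam).mono (Ici_subset_Ici.mpr ht₀))
  exact hconvex.subset (subset_univ _) (convex_Ici 0)
end

section
/- Let λ > 0, let g(t) = e^{-λt}(1 + λt + (λt)²/2), and let g_con be as defined (equal to g for t > t₀ and equal to the tangent line through (0,1) for 0 ≤ t ≤ t₀, where t₀ = s₀/λ and s₀ ≈ 3.3836 is the tangency point). Then g_con(t) ≤ g(t) for all t ≥ 0. -/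
/-!
Substituting `s = λ t` reduces everything to `λ = 1`, i.e. to `g s = e^{-s} (1 + s + s²/2)`, and
the defining equation of `s₀` says that the tangent to `g` at `s₀` is the line `1 - c s` with
`c = s₀² e^{-s₀} / 2`. Since `g' s = -s² e^{-s} / 2`, the gap `F s = g s - (1 - c s)` has
`F' s = (s₀² e^{-s₀} - s² e^{-s}) / 2` and `F'' s = -s (2 - s) e^{-s} / 2`. So `F` is concave on
`[0, 2]`; and `s₀ > 2`, because `g s - s g' s` increases strictly on `[0, 2]` from the value `1`,
so on `[2, s₀]` the decrease of `s² e^{-s}` makes `F` antitone. With `F 0 = F s₀ = 0` this gives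
`F ≥ 0` on `[0, s₀]`.
-/

open Real Set

lemma nonneg_of_concaveOn_of_antitoneOn {F : ℝ → ℝ} {a b c x : ℝ} (hab : a ≤ b) (hbc : b ≤ c)
    (hconc : ConcaveOn ℝ (Icc a b) F) (hanti : AntitoneOn F (Icc b c))
    (ha : 0 ≤ F a) (hc : 0 ≤ F c) (hx : x ∈ Icc a c) : 0 ≤ F x := by
  have hb : 0 ≤ F b := hc.trans (hanti ⟨le_rfl, hbc⟩ ⟨hbc, le_rfl⟩ hbc)
  rcases le_total x b with hxb | hbx
  · exact (le_min ha hb).trans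
      (hconc.min_le_of_mem_Icc ⟨le_rfl, hab⟩ ⟨hab, le_rfl⟩ ⟨hx.1, hxb⟩)
  · exact hc.trans (hanti ⟨hbx, hx.2⟩ ⟨hbc, le_rfl⟩ hx.2)

/-- The function `g` of the statement for `λ = 1`. -/
noncomputable def erlangTail (s : ℝ) : ℝ := exp (-s) * (1 + s + s ^ 2 / 2)

lemma hasDerivAt_exp_neg (s : ℝ) : HasDerivAt (fun s => exp (-s)) (-exp (-s)) s := by
  simpa using (hasDerivAt_neg s).exp

lemma hasDerivAt_erlangTail (s : ℝ) :
    HasDerivAt erlangTail (-(s ^ 2 * exp (-s)) / 2) s := by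
  have hp : HasDerivAt (fun s : ℝ => 1 + s + s ^ 2 / 2) (1 + s) s := by
    refine (((hasDerivAt_id' s).const_add 1).add ((hasDerivAt_pow 2 s).div_const 2)).congr_deriv ?_
    push_cast
    ring
  refine ((hasDerivAt_exp_neg s).mul hp).congr_deriv ?_
  ring

lemma hasDerivAt_sq_mul_exp_neg (s : ℝ) :
    HasDerivAt (fun s => s ^ 2 * exp (-s)) (s * (2 - s) * exp (-s)) s := by
  refine ((hasDerivAt_pow 2 s).mul (hasDerivAt_exp_neg s)).congr_deriv ?_
  push_cast
  ring

lemma antitoneOn_sq_mul_exp_neg : AntitoneOn (fun s : ℝ => s ^ 2 * exp (-s)) (Ici 2) := by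
  refine antitoneOn_of_hasDerivWithinAt_nonpos (convex_Ici 2)
    (fun s _ => (hasDerivAt_sq_mul_exp_neg s).continuousAt.continuousWithinAt)
    (fun s _ => (hasDerivAt_sq_mul_exp_neg s).hasDerivWithinAt) fun s hs => ?_
  rw [interior_Ici] at hs
  have hs : 2 < s := hs
  exact mul_nonpos_of_nonpos_of_nonneg (by nlinarith) (exp_pos _).le

lemma two_lt_of_tangent_through_one {s₀ : ℝ} (hs₀ : 0 < s₀)
    (hroot : exp (-s₀) * (s₀ ^ 3 / 2 + s₀ ^ 2 / 2 + s₀ + 1) = 1) : 2 < s₀ := by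
  -- the value at `0` of the tangent to `erlangTail` at `s`
  set φ : ℝ → ℝ := fun s => erlangTail s + s * (s ^ 2 * exp (-s)) / 2
  have hφ' (s : ℝ) : HasDerivAt φ (s ^ 2 * (2 - s) * exp (-s) / 2) s := by
    refine ((hasDerivAt_erlangTail s).add
      (((hasDerivAt_id s).mul (hasDerivAt_sq_mul_exp_neg s)).div_const 2)).congr_deriv ?_
    simp only [id]
    ring
  have hmono : StrictMonoOn φ (Icc 0 2) := by
    refine strictMonoOn_of_hasDerivWithinAt_pos (convex_Icc 0 2)
      (fun s _ => (hφ' s).continuousAt.continuousWithinAt)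
      (fun s _ => (hφ' s).hasDerivWithinAt) fun s hs => ?_
    rw [interior_Icc] at hs
    have : 0 < 2 - s := by linarith [hs.2]
    have : 0 < s ^ 2 := pow_pos hs.1 2
    positivity
  by_contra! h
  have hφ0 : φ 0 = 1 := by simp [φ, erlangTail]
  have hφs₀ : φ s₀ = 1 := by
    rw [← hroot]
    simp only [φ, erlangTail]
    ring
  have := hmono ⟨le_rfl, zero_le_two⟩ ⟨hs₀.le, h⟩ hs₀
  linarith

lemma one_sub_mul_le_erlangTail {s₀ s : ℝ} (hs₀ : 0 < s₀)
    (hroot : exp (-s₀) * (s₀ ^ 3 / 2 + s₀ ^ 2 / 2 + s₀ + 1) = 1) (hs : s ∈ Icc 0 s₀) :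
    1 - s₀ ^ 2 * exp (-s₀) / 2 * s ≤ erlangTail s := by
  have h2 : 2 < s₀ := two_lt_of_tangent_through_one hs₀ hroot
  set c := s₀ ^ 2 * exp (-s₀) / 2
  set F : ℝ → ℝ := fun s => erlangTail s - (1 - c * s)
  have hF' (s : ℝ) : HasDerivAt F (c - s ^ 2 * exp (-s) / 2) s := by
    refine ((hasDerivAt_erlangTail s).sub
      (((hasDerivAt_id s).const_mul c).const_sub 1)).congr_deriv ?_
    ring
  have hF'' (s : ℝ) :
      HasDerivAt (fun s => c - s ^ 2 * exp (-s) / 2) (-(s * (2 - s) * exp (-s)) / 2) s := by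
    refine (((hasDerivAt_sq_mul_exp_neg s).div_const 2).const_sub c).congr_deriv ?_
    ring
  have hconc : ConcaveOn ℝ (Icc 0 2) F := by
    refine concaveOn_of_hasDerivWithinAt2_nonpos (convex_Icc 0 2)
      (fun s _ => (hF' s).continuousAt.continuousWithinAt)
      (fun s _ => (hF' s).hasDerivWithinAt) (fun s _ => (hF'' s).hasDerivWithinAt) fun s hs => ?_
    rw [interior_Icc] at hs
    have : 0 < 2 - s := by linarith [hs.2]
    have : 0 < s * (2 - s) * exp (-s) := by have := hs.1; positivity
    linarith
  have hanti : AntitoneOn F (Icc 2 s₀) := by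
    refine antitoneOn_of_hasDerivWithinAt_nonpos (convex_Icc 2 s₀)
      (fun s _ => (hF' s).continuousAt.continuousWithinAt)
      (fun s _ => (hF' s).hasDerivWithinAt) fun s hs => ?_
    rw [interior_Icc] at hs
    have := antitoneOn_sq_mul_exp_neg (mem_Ici.2 hs.1.le) (mem_Ici.2 h2.le) hs.2.le
    simp only [c] at this ⊢
    linarith
  have hF0 : F 0 = 0 := by simp [F, erlangTail]
  have hFs₀ : F s₀ = 0 := by
    simp only [F, c, erlangTail]
    linear_combination hroot
  have := nonneg_of_concaveOn_of_antitoneOn zero_le_two h2.le hconc hanti hF0.ge hFs₀.ge hs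
  simp only [F] at this
  linarith

theorem stmt_7 (lam : ℝ) (hlam : 0 < lam) (s₀ : ℝ) (hs₀ : 0 < s₀)
    (hroot : Real.exp (-s₀) * (s₀ ^ 3 / 2 + s₀ ^ 2 / 2 + s₀ + 1) = 1) (t : ℝ) (ht : 0 ≤ t) :
    (if t ≤ s₀ / lam then
        Real.exp (-lam * (s₀ / lam)) * (1 + lam * (s₀ / lam) + (lam * (s₀ / lam)) ^ 2 / 2)
          + (t - s₀ / lam) * (-(lam ^ 3 / 2) * (s₀ / lam) ^ 2 * Real.exp (-lam * (s₀ / lam)))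
      else
        Real.exp (-lam * t) * (1 + lam * t + (lam * t) ^ 2 / 2))
      ≤ Real.exp (-lam * t) * (1 + lam * t + (lam * t) ^ 2 / 2) := by
  split_ifs with hle
  · have hs : lam * t ∈ Icc 0 s₀ := ⟨by positivity, (le_div_iff₀' hlam).1 hle⟩
    have hkey := one_sub_mul_le_erlangTail hs₀ hroot hs
    have hcancel : lam * (s₀ / lam) = s₀ := mul_div_cancel₀ s₀ hlam.ne'
    have htangent : exp (-lam * (s₀ / lam)) * (1 + lam * (s₀ / lam) + (lam * (s₀ / lam)) ^ 2 / 2)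
          + (t - s₀ / lam) * (-(lam ^ 3 / 2) * (s₀ / lam) ^ 2 * exp (-lam * (s₀ / lam)))
        = 1 - s₀ ^ 2 * exp (-s₀) / 2 * (lam * t) := by
      rw [neg_mul, hcancel]
      field_simp
      linear_combination 2 * hroot
    rw [htangent, neg_mul]
    exact hkey
  · exact le_rfl
end
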